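/- Let G be a twin-free weighted graph. Then rk(M(k,G)) = orb_k(G), the number of orbits of Aut(G) acting coordinatewise on V(G)^k, for every k ≥ 0. -/

import Mathlib

open scoped BigOperators Classical

/-- A `k`-labeled graph: a finite multigraph (no loops) with `k` distinct
nodes labeled `1, …, k`. -/
structure KGraph (k : ℕ) where
  V : Type
  [fV : Fintype V]
  [dV : DecidableEq V]
  lab : Fin k → V
  lab_inj : Function.Injective lab
  edges : Multiset (V × V)
  loopless : ∀ e ∈ edges, e.1 ≠ e.2

attribute [instance] KGraph.fV KGraph.dV

/-- The weighted partial homomorphism number `hom_φ(F, G)`, for a weighted graph `G`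
on node set `W` with node weights `α` and edge weights `β`. -/
noncomputable def homPhi {k : ℕ} {W : Type} [Fintype W] [DecidableEq W]
    (α : W → ℝ) (β : W → W → ℝ) (F : KGraph k) (φ : Fin k → W) : ℝ :=
  ∑ ψ ∈ Finset.univ.filter (fun ψ : F.V → W => ψ ∘ F.lab = φ),
    ((∏ u, α (ψ u)) / ∏ i, α (φ i)) *
      (F.edges.map (fun e => β (ψ e.1) (ψ e.2))).prod

/-- The full weighted homomorphism number `hom(F, G)` (labels ignored). -/
noncomputable def homT {k : ℕ} {W : Type} [Fintype W] [DecidableEq W]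
    (α : W → ℝ) (β : W → W → ℝ) (F : KGraph k) : ℝ :=
  ∑ ψ : F.V → W, (∏ u, α (ψ u)) * (F.edges.map (fun e => β (ψ e.1) (ψ e.2))).prod

/-- Embedding of the vertices of `F₂` into the gluing product `F₁F₂`. -/
noncomputable def KGraph.emb {k : ℕ} (F₁ F₂ : KGraph k) (v : F₂.V) :
    F₁.V ⊕ {v : F₂.V // v ∉ Set.range F₂.lab} :=
  if h : v ∈ Set.range F₂.lab then
    Sum.inl (F₁.lab ((Equiv.ofInjective F₂.lab F₂.lab_inj).symm ⟨v, h⟩))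
  else Sum.inr ⟨v, h⟩

theorem KGraph.emb_inj {k : ℕ} (F₁ F₂ : KGraph k) :
    Function.Injective (KGraph.emb F₁ F₂) := by
  intro a b hab
  by_cases h1 : a ∈ Set.range F₂.lab <;> by_cases h2 : b ∈ Set.range F₂.lab
  · rw [KGraph.emb, dif_pos h1, KGraph.emb, dif_pos h2] at hab
    have h3 := F₁.lab_inj (Sum.inl.inj hab)
    have h4 := (Equiv.ofInjective F₂.lab F₂.lab_inj).symm.injective h3
    simpa using congrArg Subtype.val h4
  · rw [KGraph.emb, dif_pos h1, KGraph.emb, dif_neg h2] at hab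
    exact absurd hab (by simp)
  · rw [KGraph.emb, dif_neg h1, KGraph.emb, dif_pos h2] at hab
    exact absurd hab (by simp)
  · rw [KGraph.emb, dif_neg h1, KGraph.emb, dif_neg h2] at hab
    simpa using Sum.inr.inj hab

/-- The gluing product `F₁F₂` of two `k`-labeled graphs: take the disjoint union
and identify equally-labeled nodes. -/
noncomputable def glue {k : ℕ} (F₁ F₂ : KGraph k) : KGraph k where
  V := F₁.V ⊕ {v : F₂.V // v ∉ Set.range F₂.lab}
  lab := fun i => Sum.inl (F₁.lab i)
  lab_inj := Sum.inl_injective.comp F₁.lab_inj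
  edges := F₁.edges.map (fun e => (Sum.inl e.1, Sum.inl e.2)) +
    F₂.edges.map (fun e => (KGraph.emb F₁ F₂ e.1, KGraph.emb F₁ F₂ e.2))
  loopless := by
    intro e he
    simp only [Multiset.mem_add, Multiset.mem_map] at he
    rcases he with ⟨a, ha, rfl⟩ | ⟨a, ha, rfl⟩
    · simpa using F₁.loopless a ha
    · exact fun h => F₂.loopless a ha (KGraph.emb_inj F₁ F₂ h)

/-- `σ` is an automorphism of the weighted graph given by `(α, β)`. -/
def IsAut {W : Type} (α : W → ℝ) (β : W → W → ℝ) (σ : Equiv.Perm W) : Prop :=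
  (∀ v, α (σ v) = α v) ∧ ∀ u v, β (σ u) (σ v) = β u v

/-- The number of orbits of `Aut(G)` acting coordinatewise on `V(G)^k`. -/
noncomputable def orbCount {W : Type} [Fintype W] (α : W → ℝ) (β : W → W → ℝ)
    (k : ℕ) : ℕ :=
  Nat.card (Quot (fun φ ψ : Fin k → W =>
    ∃ σ : Equiv.Perm W, IsAut α β σ ∧ ψ = σ ∘ φ))

section Glue
variable {m : ℕ} (α : Fin m → ℝ) (β : Fin m → Fin m → ℝ)

lemma emb_lab {k : ℕ} (F₁ F₂ : KGraph k) (i : Fin k) :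
    KGraph.emb F₁ F₂ (F₂.lab i) = Sum.inl (F₁.lab i) := by
  rw [KGraph.emb, dif_pos ⟨i, rfl⟩]
  congr 1
  have : (⟨F₂.lab i, ⟨i, rfl⟩⟩ : Set.range F₂.lab) = Equiv.ofInjective F₂.lab F₂.lab_inj i := rfl
  rw [this, Equiv.symm_apply_apply]

lemma emb_not_lab {k : ℕ} (F₁ F₂ : KGraph k) (v : F₂.V) (h : v ∉ Set.range F₂.lab) :
    KGraph.emb F₁ F₂ v = Sum.inr ⟨v, h⟩ := by rw [KGraph.emb, dif_neg h]

theorem homPhi_glue (hα : ∀ i, 0 < α i) {k : ℕ} (F₁ F₂ : KGraph k) (φ : Fin k → Fin m) :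
    homPhi α β (glue F₁ F₂) φ = homPhi α β F₁ φ * homPhi α β F₂ φ := by
  classical
  have hD : (0:ℝ) < ∏ i, α (φ i) := Finset.prod_pos fun i _ => hα (φ i)
  unfold homPhi
  rw [Finset.sum_mul_sum, ← Finset.sum_product']
  refine Finset.sum_nbij' (fun ψ => (ψ ∘ Sum.inl, ψ ∘ KGraph.emb F₁ F₂))
    (fun p => Sum.elim p.1 (fun u => p.2 u.1)) ?_ ?_ ?_ ?_ ?_
  · -- membership forward
    intro ψ hψ
    simp only [Finset.mem_filter, Finset.mem_univ, true_and] at hψ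
    rw [Finset.mem_product]
    constructor
    · simp only [Finset.mem_filter, Finset.mem_univ, true_and]
      exact hψ
    · simp only [Finset.mem_filter, Finset.mem_univ, true_and]
      funext i
      show ψ (KGraph.emb F₁ F₂ (F₂.lab i)) = φ i
      rw [emb_lab]
      exact congrFun hψ i
  · -- membership backward
    intro p hp
    rw [Finset.mem_product] at hp
    obtain ⟨h1, _⟩ := hp
    simp only [Finset.mem_filter, Finset.mem_univ, true_and] at h1 ⊢
    refine Finset.mem_filter.mpr ⟨Finset.mem_univ _, ?_⟩
    funext i
    exact congrFun h1 i
  · -- left inverse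
    intro ψ _
    funext x
    cases x with
    | inl v => rfl
    | inr u =>
      show (ψ ∘ KGraph.emb F₁ F₂) u.1 = ψ (Sum.inr u)
      simp [Function.comp, emb_not_lab F₁ F₂ u.1 u.2]
  · -- right inverse
    intro p hp
    rw [Finset.mem_product] at hp
    obtain ⟨h1, h2⟩ := hp
    simp only [Finset.mem_filter, Finset.mem_univ, true_and] at h1 h2
    have e1 : (Sum.elim p.1 (fun u : {v : F₂.V // v ∉ Set.range F₂.lab} => p.2 u.1)) ∘ Sum.inl = p.1 := rfl
    have e2 : (Sum.elim p.1 (fun u : {v : F₂.V // v ∉ Set.range F₂.lab} => p.2 u.1)) ∘ KGraph.emb F₁ F₂ = p.2 := by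
      funext v
      by_cases h : v ∈ Set.range F₂.lab
      · obtain ⟨i, rfl⟩ := h
        show Sum.elim p.1 (fun u : {v : F₂.V // v ∉ Set.range F₂.lab} => p.2 u.1)
          (KGraph.emb F₁ F₂ (F₂.lab i)) = _
        rw [emb_lab]
        calc p.1 (F₁.lab i) = φ i := congrFun h1 i
          _ = p.2 (F₂.lab i) := (congrFun h2 i).symm
      · show Sum.elim p.1 (fun u : {v : F₂.V // v ∉ Set.range F₂.lab} => p.2 u.1)
          (KGraph.emb F₁ F₂ v) = _
        rw [emb_not_lab F₁ F₂ v h]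
        rfl
    exact Prod.ext e1 e2
  · -- values
    intro ψ hψ
    simp only [Finset.mem_filter, Finset.mem_univ, true_and] at hψ
    have hsplit : (∏ u : (glue F₁ F₂).V, α (ψ u)) =
        (∏ v : F₁.V, α (ψ (Sum.inl v))) *
        (∏ u : {v : F₂.V // v ∉ Set.range F₂.lab}, α (ψ (Sum.inr u))) :=
      Fintype.prod_sum_type _
    have hψ2 : (∏ v : F₂.V, α ((ψ ∘ KGraph.emb F₁ F₂) v)) =
        (∏ i, α (φ i)) *
        (∏ u : {v : F₂.V // v ∉ Set.range F₂.lab}, α (ψ (Sum.inr u))) := by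
      rw [← Finset.prod_filter_mul_prod_filter_not Finset.univ (fun v => v ∈ Set.range F₂.lab)]
      congr 1
      · refine (Finset.prod_bij (fun (i : Fin k) _ => F₂.lab i) ?_ ?_ ?_ ?_).symm
        · intro i _; simp [Set.mem_range]
        · intro a _ b _ h; exact F₂.lab_inj h
        · intro v hv
          simp only [Finset.mem_filter, Finset.mem_univ, true_and, Set.mem_range] at hv
          obtain ⟨i, rfl⟩ := hv
          exact ⟨i, Finset.mem_univ i, rfl⟩
        · intro i _
          show α (φ i) = α (ψ (KGraph.emb F₁ F₂ (F₂.lab i)))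
          rw [emb_lab]
          exact congrArg α (congrFun hψ i).symm
      · rw [Finset.prod_subtype (p := fun v => v ∉ Set.range F₂.lab) _ (by intro x; simp)
            (fun v => α ((ψ ∘ KGraph.emb F₁ F₂) v))]
        apply Finset.prod_congr rfl
        intro u _
        show α (ψ (KGraph.emb F₁ F₂ u.1)) = _
        rw [emb_not_lab F₁ F₂ u.1 u.2]
    have hedges : ((glue F₁ F₂).edges.map (fun e => β (ψ e.1) (ψ e.2))).prod =
        (F₁.edges.map (fun e => β ((ψ ∘ Sum.inl) e.1) ((ψ ∘ Sum.inl) e.2))).prod *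
        (F₂.edges.map (fun e => β ((ψ ∘ KGraph.emb F₁ F₂) e.1) ((ψ ∘ KGraph.emb F₁ F₂) e.2))).prod := by
      show ((F₁.edges.map (fun e : F₁.V × F₁.V => ((Sum.inl e.1 : (glue F₁ F₂).V), (Sum.inl e.2 : (glue F₁ F₂).V))) +
        F₂.edges.map (fun e : F₂.V × F₂.V => (KGraph.emb F₁ F₂ e.1, KGraph.emb F₁ F₂ e.2))).map
          (fun e : (glue F₁ F₂).V × (glue F₁ F₂).V => β (ψ e.1) (ψ e.2))).prod = _
      refine (congrArg Multiset.prod (Multiset.map_add _ _ _)).trans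
        ((Multiset.prod_add _ _).trans ?_)
      congr 1 <;> exact congrArg Multiset.prod (Multiset.map_map _ _ _)
    rw [hedges, hsplit]
    rw [show (∏ u : F₂.V, α ((ψ ∘ KGraph.emb F₁ F₂) u)) = _ from hψ2]
    field_simp
    rw [show (∏ x, α ((ψ ∘ Sum.inl) x)) = ∏ v : F₁.V, α (ψ (Sum.inl v)) from rfl]
    ring
end Glue

section Basic
variable {m : ℕ} (α : Fin m → ℝ) (β : Fin m → Fin m → ℝ)

/-- A graph with only labeled vertices. -/
def labK (n : ℕ) (E : Multiset (Fin n × Fin n)) (h : ∀ e ∈ E, e.1 ≠ e.2) : KGraph n :=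
  { V := Fin n, lab := id, lab_inj := fun _ _ h => h, edges := E, loopless := h }

lemma homPhi_labK (hα : ∀ i, 0 < α i) {n : ℕ} (E : Multiset (Fin n × Fin n))
    (h : ∀ e ∈ E, e.1 ≠ e.2) (φ : Fin n → Fin m) :
    homPhi α β (labK n E h) φ = (E.map (fun e => β (φ e.1) (φ e.2))).prod := by
  unfold homPhi labK
  have : (Finset.univ.filter (fun ψ : Fin n → Fin m => ψ ∘ id = φ)) = {φ} := by
    ext ψ; simp [Function.comp_def, funext_iff]
  rw [this, Finset.sum_singleton, div_self, one_mul]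
  exact ne_of_gt (Finset.prod_pos fun i _ => hα (φ i))

lemma homPhi_edge (hα : ∀ i, 0 < α i) {n : ℕ} {i j : Fin n} (hij : i ≠ j) (φ : Fin n → Fin m) :
    homPhi α β (labK n {(i,j)} (by simpa using hij)) φ = β (φ i) (φ j) := by
  rw [homPhi_labK α β hα]; simp

end Basic

section Part3
variable {m : ℕ} (α : Fin m → ℝ) (β : Fin m → Fin m → ℝ)

theorem homT_expand {k : ℕ} (hα : ∀ i, 0 < α i) (F : KGraph k) :
    homT α β F = ∑ φ : Fin k → Fin m, (∏ i, α (φ i)) * homPhi α β F φ := by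
  unfold homT homPhi
  rw [← Finset.sum_fiberwise (Finset.univ) (fun ψ : F.V → Fin m => ψ ∘ F.lab)
    (fun ψ => (∏ u, α (ψ u)) * (F.edges.map (fun e => β (ψ e.1) (ψ e.2))).prod)]
  apply Finset.sum_congr rfl
  intro φ _
  rw [Finset.mul_sum]
  apply Finset.sum_congr rfl
  intro ψ _
  have hD : (∏ i, α (φ i)) ≠ 0 := ne_of_gt (Finset.prod_pos fun i _ => hα (φ i))
  field_simp

theorem homT_glue {k : ℕ} (hα : ∀ i, 0 < α i) (F₁ F₂ : KGraph k) :
    homT α β (glue F₁ F₂) =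
      ∑ φ : Fin k → Fin m, (∏ i, α (φ i)) * (homPhi α β F₁ φ * homPhi α β F₂ φ) := by
  rw [homT_expand α β hα]
  exact Finset.sum_congr rfl fun φ _ => by rw [homPhi_glue α β hα]

/-- Unlabel the last label. -/
def unlab {n : ℕ} (F : KGraph (n+1)) : KGraph n :=
  { V := F.V, lab := F.lab ∘ Fin.castSucc, lab_inj := F.lab_inj.comp (Fin.castSucc_injective n),
    edges := F.edges, loopless := F.loopless }

lemma funext_snoc_iff {n : ℕ} {X : Type*} (f : Fin (n+1) → X) (φ : Fin n → X) (w : X) :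
    f = Fin.snoc φ w ↔ (f ∘ Fin.castSucc = φ ∧ f (Fin.last n) = w) := by
  constructor
  · rintro rfl
    refine ⟨funext fun j => ?_, ?_⟩ <;> simp
  · rintro ⟨h1, h2⟩
    funext i
    refine Fin.lastCases ?_ (fun j => ?_) i
    · simpa using h2
    · simpa using congrFun h1 j

theorem homPhi_unlab {n : ℕ} (hα : ∀ i, 0 < α i) (F : KGraph (n+1)) (φ : Fin n → Fin m) :
    homPhi α β (unlab F) φ = ∑ w, α w * homPhi α β F (Fin.snoc φ w) := by
  unfold homPhi
  have key : ∀ w : Fin m,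
      (Finset.univ.filter (fun ψ : F.V → Fin m => ψ ∘ F.lab = Fin.snoc φ w)) =
      (Finset.univ.filter
        (fun ψ : F.V → Fin m => ψ ∘ (unlab F).lab = φ)).filter
          (fun ψ => ψ (F.lab (Fin.last n)) = w) := by
    intro w
    rw [Finset.filter_filter]
    apply Finset.filter_congr
    intro ψ _
    rw [funext_snoc_iff]
    constructor
    · rintro ⟨h1, h2⟩
      exact ⟨h1, h2⟩
    · rintro ⟨h1, h2⟩
      exact ⟨h1, h2⟩
  calc ∑ ψ ∈ Finset.univ.filter (fun ψ : F.V → Fin m => ψ ∘ (unlab F).lab = φ),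
        ((∏ u, α (ψ u)) / ∏ i, α (φ i)) * ((unlab F).edges.map (fun e => β (ψ e.1) (ψ e.2))).prod
      = ∑ w, ∑ ψ ∈ (Finset.univ.filter
          (fun ψ : F.V → Fin m => ψ ∘ (unlab F).lab = φ)).filter
            (fun ψ => ψ (F.lab (Fin.last n)) = w),
          ((∏ u, α (ψ u)) / ∏ i, α (φ i)) * ((unlab F).edges.map (fun e => β (ψ e.1) (ψ e.2))).prod := by
        rw [Finset.sum_fiberwise]
    _ = _ := by
        apply Finset.sum_congr rfl
        intro w _
        rw [← key w, Finset.mul_sum]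
        apply Finset.sum_congr rfl
        intro ψ _
        have hsnoc : (∏ i : Fin (n+1), α ((Fin.snoc φ w : Fin (n+1) → Fin m) i)) = (∏ i, α (φ i)) * α w := by
          rw [Fin.prod_univ_castSucc]
          simp
        rw [hsnoc]
        have hE : ((unlab F).edges.map (fun e => β (ψ e.1) (ψ e.2))).prod =
            (F.edges.map (fun e => β (ψ e.1) (ψ e.2))).prod := rfl
        rw [hE]
        have h1 : (∏ i, α (φ i)) ≠ 0 := ne_of_gt (Finset.prod_pos fun i _ => hα (φ i))
        have h2 : α w ≠ 0 := ne_of_gt (hα w)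
        field_simp
end Part3

section Part4
variable {m : ℕ} (α : Fin m → ℝ) (β : Fin m → Fin m → ℝ)

/-- The graph algebra: span of the partial homomorphism functions. -/
noncomputable def AA (n : ℕ) : Submodule ℝ ((Fin n → Fin m) → ℝ) :=
  Submodule.span ℝ (Set.range (fun F : KGraph n => homPhi α β F))

instance KGraph.instInhabited {n : ℕ} : Inhabited (KGraph n) := ⟨labK n 0 (by simp)⟩

lemma homPhi_mem_AA {n : ℕ} (F : KGraph n) : homPhi α β F ∈ AA α β n :=
  Submodule.subset_span ⟨F, rfl⟩

lemma one_mem_AA (hα : ∀ i, 0 < α i) {n : ℕ} : (1 : (Fin n → Fin m) → ℝ) ∈ AA α β n := by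
  have : (1 : (Fin n → Fin m) → ℝ) = homPhi α β (labK n 0 (by simp)) := by
    funext φ
    rw [homPhi_labK α β hα]
    simp
  rw [this]
  exact homPhi_mem_AA α β _

lemma const_mem_AA (hα : ∀ i, 0 < α i) {n : ℕ} (c : ℝ) :
    (fun _ : Fin n → Fin m => c) ∈ AA α β n := by
  have : (fun _ : Fin n → Fin m => c) = c • (1 : (Fin n → Fin m) → ℝ) := by
    funext φ; simp
  rw [this]
  exact Submodule.smul_mem _ _ (one_mem_AA α β hα)

lemma mul_mem_AA (hα : ∀ i, 0 < α i) {n : ℕ} {p q : (Fin n → Fin m) → ℝ}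
    (hp : p ∈ AA α β n) (hq : q ∈ AA α β n) : p * q ∈ AA α β n := by
  have key : ∀ F : KGraph n, ∀ q ∈ AA α β n, homPhi α β F * q ∈ AA α β n := by
    intro F q hq
    refine Submodule.span_induction ?_ ?_ ?_ ?_ hq
    · rintro _ ⟨F', rfl⟩
      have : homPhi α β F * homPhi α β F' = homPhi α β (glue F F') := by
        funext φ
        exact (homPhi_glue α β hα F F' φ).symm
      rw [this]
      exact homPhi_mem_AA α β _
    · simpa using Submodule.zero_mem _
    · intro a b _ _ ha hb
      have : homPhi α β F * (a + b) = homPhi α β F * a + homPhi α β F * b := by ring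
      rw [this]; exact Submodule.add_mem _ ha hb
    · intro c a _ ha
      have : homPhi α β F * (c • a) = c • (homPhi α β F * a) := by
        funext φ; simp [mul_comm, mul_assoc, mul_left_comm]
      rw [this]; exact Submodule.smul_mem _ _ ha
  refine Submodule.span_induction ?_ ?_ ?_ ?_ hp
  · rintro _ ⟨F, rfl⟩; exact key F q hq
  · simpa using Submodule.zero_mem _
  · intro a b _ _ ha hb
    have : (a + b) * q = a * q + b * q := by ring
    rw [this]; exact Submodule.add_mem _ ha hb
  · intro c a _ ha
    have : (c • a) * q = c • (a * q) := by
      funext φ; simp [mul_assoc]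
    rw [this]; exact Submodule.smul_mem _ _ ha

/-- Two `n`-tuples are equivalent if all partial homomorphism functions agree on them. -/
def relE (n : ℕ) (φ ψ : Fin n → Fin m) : Prop :=
  ∀ F : KGraph n, homPhi α β F φ = homPhi α β F ψ

lemma relE_refl {n : ℕ} (φ : Fin n → Fin m) : relE α β n φ φ := fun _ => rfl
lemma relE_symm {n : ℕ} {φ ψ : Fin n → Fin m} (h : relE α β n φ ψ) : relE α β n ψ φ :=
  fun F => (h F).symm
lemma relE_trans {n : ℕ} {φ ψ χ : Fin n → Fin m} (h : relE α β n φ ψ)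
    (h' : relE α β n ψ χ) : relE α β n φ χ := fun F => (h F).trans (h' F)

lemma eq_of_relE {n : ℕ} {f : (Fin n → Fin m) → ℝ} (hf : f ∈ AA α β n)
    {φ ψ : Fin n → Fin m} (h : relE α β n φ ψ) : f φ = f ψ := by
  refine Submodule.span_induction ?_ ?_ ?_ ?_ hf
  · rintro _ ⟨F, rfl⟩; exact h F
  · rfl
  · intro a b _ _ ha hb; simp only [Pi.add_apply, ha, hb]
  · intro c a _ ha; simp only [Pi.smul_apply, ha]

/-- The indicator function of an equivalence class lies in the graph algebra. -/
lemma indicator_mem_AA (hα : ∀ i, 0 < α i) {n : ℕ} (φ : Fin n → Fin m) :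
    (fun χ => if relE α β n φ χ then (1:ℝ) else 0) ∈ AA α β n := by
  classical
  set B := Finset.univ.filter (fun ψ : Fin n → Fin m => ¬ relE α β n φ ψ) with hB
  have hch : ∀ ψ ∈ B, ∃ F : KGraph n, homPhi α β F φ ≠ homPhi α β F ψ := by
    intro ψ hψ
    rw [hB, Finset.mem_filter] at hψ
    by_contra hcon
    push_neg at hcon
    exact hψ.2 (fun F => hcon F)
  choose! Fc hFc using hch
  set g : (Fin n → Fin m) → (Fin n → Fin m) → ℝ := fun ψ χ =>
    (homPhi α β (Fc ψ) χ - homPhi α β (Fc ψ) ψ) *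
      (homPhi α β (Fc ψ) φ - homPhi α β (Fc ψ) ψ)⁻¹ with hg
  have hgmem : ∀ ψ ∈ B, (g ψ) ∈ AA α β n := by
    intro ψ _
    have : g ψ = (homPhi α β (Fc ψ) φ - homPhi α β (Fc ψ) ψ)⁻¹ •
        (homPhi α β (Fc ψ) + (fun _ => - homPhi α β (Fc ψ) ψ)) := by
      funext χ; simp [hg]; ring
    rw [this]
    exact Submodule.smul_mem _ _ (Submodule.add_mem _ (homPhi_mem_AA α β _)
      (const_mem_AA α β hα _))
  have hprodmem : (∏ ψ ∈ B, g ψ) ∈ AA α β n := by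
    refine Finset.prod_induction g (· ∈ AA α β n) (fun a b ha hb => mul_mem_AA α β hα ha hb)
      (one_mem_AA α β hα) hgmem
  have heq : (∏ ψ ∈ B, g ψ) = (fun χ => if relE α β n φ χ then (1:ℝ) else 0) := by
    funext χ
    by_cases hχ : relE α β n φ χ
    · rw [if_pos hχ]
      have : ∀ ψ ∈ B, g ψ χ = 1 := by
        intro ψ hψ
        have hne : homPhi α β (Fc ψ) φ - homPhi α β (Fc ψ) ψ ≠ 0 :=
          sub_ne_zero.mpr (hFc ψ hψ)
        have : g ψ χ = g ψ φ := by
          simp only [hg]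
          rw [(eq_of_relE α β (homPhi_mem_AA α β (Fc ψ)) hχ : homPhi α β (Fc ψ) φ = _)]
        rw [this, hg]
        exact mul_inv_cancel₀ hne
      calc (∏ ψ ∈ B, g ψ) χ = ∏ ψ ∈ B, g ψ χ := by
            simp [Finset.prod_apply]
        _ = 1 := Finset.prod_eq_one this
    · rw [if_neg hχ]
      have hχB : χ ∈ B := by rw [hB, Finset.mem_filter]; exact ⟨Finset.mem_univ _, hχ⟩
      calc (∏ ψ ∈ B, g ψ) χ = ∏ ψ ∈ B, g ψ χ := by
            simp [Finset.prod_apply]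
        _ = 0 := Finset.prod_eq_zero hχB (by simp [hg])
  rw [← heq]
  exact hprodmem

end Part4

section Part5
variable {m : ℕ} (α : Fin m → ℝ) (β : Fin m → Fin m → ℝ)

/-- Evaluation along the quotient map. -/
noncomputable def evQ (n : ℕ) : (Quot (relE α β n) → ℝ) →ₗ[ℝ] ((Fin n → Fin m) → ℝ) where
  toFun g := g ∘ Quot.mk _
  map_add' _ _ := rfl
  map_smul' _ _ := rfl

lemma evQ_inj (n : ℕ) : Function.Injective (evQ α β n) := by
  intro g g' h
  funext q
  induction q using Quot.ind with
  | _ a => exact congrFun h a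

lemma range_evQ (hα : ∀ i, 0 < α i) (n : ℕ) :
    LinearMap.range (evQ α β n) = AA α β n := by
  apply le_antisymm
  · rintro f ⟨g, rfl⟩
    classical
    have hrepr : (evQ α β n) g = ∑ φ : Fin n → Fin m,
        (g (Quot.mk _ φ) * (((Finset.univ.filter (fun ψ => relE α β n φ ψ)).card : ℝ))⁻¹) •
          (fun χ => if relE α β n φ χ then (1:ℝ) else 0) := by
      funext χ
      rw [Finset.sum_apply]
      have h1 : ∀ φ : Fin n → Fin m,
          ((g (Quot.mk _ φ) * (((Finset.univ.filter (fun ψ => relE α β n φ ψ)).card : ℝ))⁻¹) •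
            (fun χ' => if relE α β n φ χ' then (1:ℝ) else 0)) χ =
          if relE α β n φ χ then
            g (Quot.mk _ φ) * (((Finset.univ.filter (fun ψ => relE α β n φ ψ)).card : ℝ))⁻¹
          else 0 := by
        intro φ
        by_cases h : relE α β n φ χ <;> simp [h]
      rw [Finset.sum_congr rfl (fun φ _ => h1 φ)]
      rw [← Finset.sum_filter]
      have h2 : ∀ φ ∈ Finset.univ.filter (fun φ => relE α β n φ χ),
          g (Quot.mk _ φ) * (((Finset.univ.filter (fun ψ => relE α β n φ ψ)).card : ℝ))⁻¹ =
          g (Quot.mk _ χ) * (((Finset.univ.filter (fun ψ => relE α β n χ ψ)).card : ℝ))⁻¹ := by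
        intro φ hφ
        rw [Finset.mem_filter] at hφ
        have hrel := hφ.2
        have hsets2 : Finset.univ.filter (fun ψ => relE α β n φ ψ) =
            Finset.univ.filter (fun ψ => relE α β n χ ψ) := by
          apply Finset.filter_congr
          intro ψ _
          exact ⟨fun h => relE_trans α β (relE_symm α β hrel) h,
                 fun h => relE_trans α β hrel h⟩
        rw [hsets2, congrArg g (Quot.sound hrel)]
      rw [Finset.sum_congr rfl h2, Finset.sum_const, nsmul_eq_mul]
      have hsets : Finset.univ.filter (fun φ => relE α β n φ χ) =
          Finset.univ.filter (fun ψ => relE α β n χ ψ) := by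
        apply Finset.filter_congr
        intro ψ _
        exact ⟨relE_symm α β, relE_symm α β⟩
      rw [hsets]
      have hpos : (0:ℝ) < ((Finset.univ.filter (fun ψ => relE α β n χ ψ)).card : ℝ) := by
        have hmm : χ ∈ Finset.univ.filter (fun ψ => relE α β n χ ψ) :=
          Finset.mem_filter.mpr ⟨Finset.mem_univ _, relE_refl α β χ⟩
        have := Finset.card_pos.mpr ⟨χ, hmm⟩
        exact_mod_cast this
      field_simp
      rfl
    rw [hrepr]
    apply Submodule.sum_mem
    intro φ _
    exact Submodule.smul_mem _ _ (indicator_mem_AA α β hα φ)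
  · show Submodule.span ℝ (Set.range (fun F : KGraph n => homPhi α β F)) ≤ _
    rw [Submodule.span_le]
    rintro _ ⟨F, rfl⟩
    exact ⟨Quot.lift (homPhi α β F) (fun a b hab => hab F), rfl⟩

lemma rank_AA (hα : ∀ i, 0 < α i) (n : ℕ) :
    Module.rank ℝ ↥(AA α β n) = Nat.card (Quot (relE α β n)) := by
  classical
  haveI := Classical.decEq (Quot (relE α β n))
  haveI : Fintype (Quot (relE α β n)) :=
    Fintype.ofSurjective (Quot.mk _) (fun q => Quot.exists_rep q)
  rw [← range_evQ α β hα n]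
  rw [rank_range_of_injective _ (evQ_inj α β n)]
  rw [rank_fun']
  rw [Nat.card_eq_fintype_card]
end Part5

section Part6
variable {m : ℕ} (α : Fin m → ℝ) (β : Fin m → Fin m → ℝ)

lemma sumweight_eq (hα : ∀ i, 0 < α i) {n : ℕ} {φ ψ : Fin n → Fin m}
    (h : relE α β n φ ψ) {f : (Fin (n+1) → Fin m) → ℝ} (hf : f ∈ AA α β (n+1)) :
    ∑ w, α w * f (Fin.snoc φ w) = ∑ w, α w * f (Fin.snoc ψ w) := by
  refine Submodule.span_induction ?_ ?_ ?_ ?_ hf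
  · rintro _ ⟨F, rfl⟩
    rw [← homPhi_unlab α β hα F φ, ← homPhi_unlab α β hα F ψ]
    exact h (unlab F)
  · simp
  · intro a b _ _ ha hb
    simp only [Pi.add_apply, mul_add, Finset.sum_add_distrib]
    rw [ha, hb]
  · intro c a _ ha
    simp only [Pi.smul_apply, smul_eq_mul]
    calc ∑ w, α w * (c * a (Fin.snoc φ w)) = c * ∑ w, α w * a (Fin.snoc φ w) := by
          rw [Finset.mul_sum]; apply Finset.sum_congr rfl; intro w _; ring
      _ = c * ∑ w, α w * a (Fin.snoc ψ w) := by rw [ha]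
      _ = ∑ w, α w * (c * a (Fin.snoc ψ w)) := by
          rw [Finset.mul_sum]; apply Finset.sum_congr rfl; intro w _; ring

lemma relE_extension (hα : ∀ i, 0 < α i) {n : ℕ} {φ ψ : Fin n → Fin m}
    (h : relE α β n φ ψ) (w : Fin m) :
    ∃ w', relE α β (n+1) (Fin.snoc φ w) (Fin.snoc ψ w') := by
  classical
  set ind : (Fin (n+1) → Fin m) → ℝ :=
    fun χ => if relE α β (n+1) (Fin.snoc φ w) χ then (1:ℝ) else 0 with hind
  have hmem : ind ∈ AA α β (n+1) := indicator_mem_AA α β hα _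
  have hsum := sumweight_eq α β hα h hmem
  by_contra hcon
  push_neg at hcon
  have hrhs : ∑ w', α w' * ind (Fin.snoc ψ w') = 0 := by
    apply Finset.sum_eq_zero
    intro w' _
    rw [hind]
    simp [hcon w']
  have hlhs : 0 < ∑ w', α w' * ind (Fin.snoc φ w') := by
    apply Finset.sum_pos'
    · intro w' _
      rw [hind]
      by_cases hc : relE α β (n+1) (Fin.snoc φ w) (Fin.snoc φ w')
      · simp only [if_pos hc, mul_one]; exact le_of_lt (hα w')
      · simp [hc]
    · refine ⟨w, Finset.mem_univ w, ?_⟩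
      rw [hind]
      simp only [if_pos (relE_refl α β _), mul_one]
      exact hα w
  rw [hsum] at hlhs
  rw [hrhs] at hlhs
  exact lt_irrefl 0 hlhs

lemma relE_append (hα : ∀ i, 0 < α i) {n : ℕ} {φ ψ : Fin n → Fin m}
    (h : relE α β n φ ψ) :
    ∀ (j : ℕ) (τ : Fin j → Fin m),
      ∃ τ', relE α β (n+j) (Fin.append φ τ) (Fin.append ψ τ') := by
  intro j
  induction j with
  | zero =>
    intro τ
    refine ⟨τ, ?_⟩
    have h1 : Fin.append φ τ = φ ∘ Fin.cast (Nat.add_zero n) := by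
      have : τ = Fin.elim0 := funext fun i => i.elim0
      rw [this, Fin.append_elim0]
    have h2 : Fin.append ψ τ = ψ ∘ Fin.cast (Nat.add_zero n) := by
      have : τ = Fin.elim0 := funext fun i => i.elim0
      rw [this, Fin.append_elim0]
    rw [h1, h2]
    have hc : ∀ χ : Fin n → Fin m, χ ∘ Fin.cast (Nat.add_zero n) = χ := by
      intro χ; funext i; rfl
    rw [hc, hc]
    exact h
  | succ j ih =>
    intro τ
    obtain ⟨τ'', hτ''⟩ := ih (Fin.init τ)
    obtain ⟨w', hw'⟩ := relE_extension α β hα hτ'' (τ (Fin.last j))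
    refine ⟨Fin.snoc τ'' w', ?_⟩
    have e1 : Fin.append φ τ = Fin.snoc (Fin.append φ (Fin.init τ)) (τ (Fin.last j)) := by
      conv_lhs => rw [← Fin.snoc_init_self τ]
      rw [Fin.append_snoc]
    have e2 : Fin.append ψ (Fin.snoc τ'' w') = Fin.snoc (Fin.append ψ τ'') w' :=
      Fin.append_snoc _ _ _
    rw [e1, e2]
    exact hw'
end Part6

section Part7
variable {m : ℕ} (α : Fin m → ℝ) (β : Fin m → Fin m → ℝ)

lemma beta_of_relE (hα : ∀ i, 0 < α i) {n : ℕ} {Φ Ψ : Fin n → Fin m}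
    (h : relE α β n Φ Ψ) {i j : Fin n} (hij : i ≠ j) :
    β (Φ i) (Φ j) = β (Ψ i) (Ψ j) := by
  have := h (labK n {(i,j)} (by simpa using hij))
  rwa [homPhi_edge α β hα hij, homPhi_edge α β hα hij] at this

/-- Easy direction: automorphisms preserve all homPhi values. -/
lemma relE_of_aut {k : ℕ} (σ : Equiv.Perm (Fin m)) (hσ : IsAut α β σ)
    (φ : Fin k → Fin m) : relE α β k φ (σ ∘ φ) := by
  intro F
  unfold homPhi
  refine Finset.sum_nbij' (fun χ => σ ∘ χ) (fun χ => σ.symm ∘ χ) ?_ ?_ ?_ ?_ ?_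
  · intro χ hχ
    simp only [Finset.mem_filter, Finset.mem_univ, true_and] at hχ ⊢
    rw [← hχ]
    rfl
  · intro χ hχ
    simp only [Finset.mem_filter, Finset.mem_univ, true_and] at hχ ⊢
    funext i
    have := congrFun hχ i
    simp only [Function.comp_apply] at this ⊢
    rw [this]
    exact σ.symm_apply_apply _
  · intro χ _; funext v; simp
  · intro χ _; funext v; simp
  · intro χ hχ
    congr 1
    · congr 1
      · exact Finset.prod_congr rfl fun u _ => (hσ.1 (χ u)).symm
      · exact Finset.prod_congr rfl fun i _ => (hσ.1 (φ i)).symm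
    · apply congrArg
      apply Multiset.map_congr rfl
      intro e _
      exact (hσ.2 (χ e.1) (χ e.2)).symm

/-- Hard direction: equivalent tuples are related by an automorphism. -/
lemma aut_of_relE (hα : ∀ i, 0 < α i) (hβ : ∀ i j, β i j = β j i)
    (htf : ∀ i j : Fin m, (∀ l, β i l = β j l) → i = j)
    {k : ℕ} {φ ψ : Fin k → Fin m} (h : relE α β k φ ψ) :
    ∃ σ : Equiv.Perm (Fin m), IsAut α β σ ∧ ψ = σ ∘ φ := by
  classical
  rcases Nat.eq_zero_or_pos m with hm | hm
  · subst hm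
    refine ⟨Equiv.refl _, ⟨fun v => v.elim0, fun u v => u.elim0⟩, funext fun i => (φ i).elim0⟩
  -- the triple enumeration
  set E3 : Fin (3*m) → Fin m := fun i => ⟨i.val % m, Nat.mod_lt _ hm⟩ with hE3
  obtain ⟨Θ, hΘ⟩ := relE_append α β hα h (3*m) E3
  set N := k + 3*m with hN
  set Φs : Fin N → Fin m := Fin.append φ E3 with hΦs
  set Ψs : Fin N → Fin m := Fin.append ψ Θ with hΨs
  -- index functions
  have hidx : ∀ (a : ℕ), a < 3 → ∀ u : Fin m, u.val + a*m < 3*m := by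
    intro a ha u; have := u.2; nlinarith
  set idx : ℕ → Fin m → Fin (3*m) := fun a u =>
    if ha : a < 3 then ⟨u.val + a*m, hidx a ha u⟩ else ⟨0, by omega⟩ with hidxdef
  have hEidx : ∀ (a : ℕ) (ha : a < 3) (u : Fin m), E3 (idx a u) = u := by
    intro a ha u
    simp only [hidxdef, dif_pos ha, hE3]
    apply Fin.ext
    simp [Nat.add_mul_mod_self_right, Nat.mod_eq_of_lt u.2]
  have hΦidx : ∀ (a : ℕ) (ha : a < 3) (u : Fin m), Φs (Fin.natAdd k (idx a u)) = u := by
    intro a ha u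
    rw [hΦs, Fin.append_right]
    exact hEidx a ha u
  set σa : ℕ → Fin m → Fin m := fun a u => Ψs (Fin.natAdd k (idx a u)) with hσa
  -- key beta facts
  have hkey : ∀ (a b : ℕ), a < 3 → b < 3 → a ≠ b → ∀ u v : Fin m,
      β (σa a u) (σa b v) = β u v := by
    intro a b ha hb hab u v
    have hne : Fin.natAdd k (idx a u) ≠ Fin.natAdd k (idx b v) := by
      simp only [hidxdef, dif_pos ha, dif_pos hb, Ne, Fin.ext_iff, Fin.natAdd]
      have hu := u.2; have hv := v.2
      intro hcon
      rcases Nat.lt_trichotomy a b with h' | h' | h'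
      · nlinarith
      · exact hab h'
      · nlinarith
    have := beta_of_relE α β hα hΘ hne
    rw [hΦidx a ha u, hΦidx b hb v] at this
    exact this.symm
  have hlab : ∀ (i : Fin k) (a : ℕ), a < 3 → ∀ u : Fin m,
      β (ψ i) (σa a u) = β (φ i) u := by
    intro i a ha u
    have hne : (Fin.castAdd (3*m) i : Fin N) ≠ Fin.natAdd k (idx a u) := by
      simp only [Ne, Fin.ext_iff, Fin.castAdd, Fin.natAdd]
      have := i.2
      simp only [Fin.castLE]
      omega
    have := beta_of_relE α β hα hΘ hne
    rw [hΦs, hΨs] at this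
    rw [Fin.append_left, Fin.append_left, Fin.append_right, Fin.append_right] at this
    rw [show E3 (idx a u) = u from hEidx a ha u] at this
    have hσΘ : σa a u = Θ (idx a u) := by
      show Ψs (Fin.natAdd k (idx a u)) = _
      rw [hΨs, Fin.append_right]
    rw [hσΘ]
    exact this.symm
  -- injectivity of σa 0 and σa 2
  have hinj0 : Function.Injective (σa 0) := by
    intro u v huv
    apply htf
    intro l
    calc β u l = β (σa 0 u) (σa 1 l) := (hkey 0 1 (by omega) (by omega) (by omega) u l).symm
      _ = β (σa 0 v) (σa 1 l) := by rw [huv]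
      _ = β v l := hkey 0 1 (by omega) (by omega) (by omega) v l
  have hinj2 : Function.Injective (σa 2) := by
    intro u v huv
    apply htf
    intro l
    calc β u l = β (σa 2 u) (σa 1 l) := (hkey 2 1 (by omega) (by omega) (by omega) u l).symm
      _ = β (σa 2 v) (σa 1 l) := by rw [huv]
      _ = β v l := hkey 2 1 (by omega) (by omega) (by omega) v l
  have hbij2 : Function.Bijective (σa 2) := Finite.injective_iff_bijective.mp hinj2
  have hσ01 : ∀ u, σa 0 u = σa 1 u := by
    intro u
    apply htf
    intro l
    obtain ⟨x, rfl⟩ := hbij2.2 l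
    rw [hkey 0 2 (by omega) (by omega) (by omega) u x,
        hkey 1 2 (by omega) (by omega) (by omega) u x]
  have hbpres : ∀ u v, β (σa 0 u) (σa 0 v) = β u v := by
    intro u v
    rw [hσ01 v]
    exact hkey 0 1 (by omega) (by omega) (by omega) u v
  have hbij0 : Function.Bijective (σa 0) := Finite.injective_iff_bijective.mp hinj0
  set σ : Equiv.Perm (Fin m) := Equiv.ofBijective _ hbij0 with hσdef
  have hσ_apply : ∀ u, σ u = σa 0 u := fun u => rfl
  -- labels are mapped correctly
  have hmaps : ψ = σ ∘ φ := by
    funext i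
    apply htf
    intro l
    obtain ⟨x, rfl⟩ := hbij0.2 l
    rw [show (σ ∘ φ) i = σa 0 (φ i) from rfl]
    rw [hbpres (φ i) x]
    exact hlab i 0 (by omega) x
  -- alpha preservation
  have halpha : ∀ v, α (σa 0 v) = α v := by
    intro v
    set ind : (Fin (N+1) → Fin m) → ℝ :=
      fun χ => if relE α β (N+1) (Fin.snoc Φs v) χ then (1:ℝ) else 0 with hind
    have hmem : ind ∈ AA α β (N+1) := indicator_mem_AA α β hα _
    have hsum := sumweight_eq α β hα hΘ hmem
    -- LHS equals α v
    have hL : ∑ w, α w * ind (Fin.snoc Φs w) = α v := by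
      rw [Finset.sum_eq_single v]
      · rw [hind]
        simp [relE_refl]
      · intro w _ hwv
        rw [hind]
        have : ¬ relE α β (N+1) (Fin.snoc Φs v) (Fin.snoc Φs w) := by
          intro hrel
          apply hwv
          apply htf
          intro l
          have hne : (Fin.natAdd k (idx 0 l)).castSucc ≠ Fin.last N := by
            exact Fin.ne_of_lt (Fin.castSucc_lt_last _)
          have hb := beta_of_relE α β hα hrel hne
          rw [Fin.snoc_castSucc, Fin.snoc_castSucc, Fin.snoc_last, Fin.snoc_last] at hb
          rw [hΦidx 0 (by omega) l] at hb
          rw [hβ w l, hβ v l]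
          exact hb.symm
        simp [this]
      · intro hv; exact absurd (Finset.mem_univ v) hv
    -- RHS: only w = σa 0 v can contribute
    have hR : ∑ w, α w * ind (Fin.snoc Ψs w) =
        α (σa 0 v) * ind (Fin.snoc Ψs (σa 0 v)) := by
      rw [Finset.sum_eq_single (σa 0 v)]
      · intro w _ hwv
        rw [hind]
        have : ¬ relE α β (N+1) (Fin.snoc Φs v) (Fin.snoc Ψs w) := by
          intro hrel
          apply hwv
          apply htf
          intro l
          obtain ⟨x, rfl⟩ := hbij0.2 l
          have hne : (Fin.natAdd k (idx 0 x)).castSucc ≠ Fin.last N :=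
            Fin.ne_of_lt (Fin.castSucc_lt_last _)
          have hb := beta_of_relE α β hα hrel hne
          rw [Fin.snoc_castSucc, Fin.snoc_castSucc, Fin.snoc_last, Fin.snoc_last] at hb
          rw [hΦidx 0 (by omega) x] at hb
          rw [show Ψs (Fin.natAdd k (idx 0 x)) = σa 0 x from rfl] at hb
          rw [hβ w (σa 0 x), hβ (σa 0 v) (σa 0 x), ← hb]
          exact (hbpres x v).symm
        simp [this]
      · intro hv; exact absurd (Finset.mem_univ _) hv
    rw [hL, hR] at hsum
    by_cases hc : relE α β (N+1) (Fin.snoc Φs v) (Fin.snoc Ψs (σa 0 v))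
    · rw [hind] at hsum
      simp only [if_pos hc, mul_one] at hsum
      exact hsum.symm
    · rw [hind] at hsum
      simp only [if_neg hc, mul_zero] at hsum
      exact absurd hsum (ne_of_gt (hα v))
  exact ⟨σ, ⟨halpha, hbpres⟩, hmaps⟩
end Part7

/-- Theorem 1: for twin-free `G`, `rk(M(k,G)) = orb_k(G)`, the number of
orbits of `Aut(G)` on `V(G)^k`. -/
theorem rank_connection_matrix_eq_orbCount {m k : ℕ}
    (α : Fin m → ℝ) (β : Fin m → Fin m → ℝ)
    (hα : ∀ i, 0 < α i) (hβ : ∀ i j, β i j = β j i)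
    (htf : ∀ i j : Fin m, (∀ l, β i l = β j l) → i = j) :
    Module.rank ℝ ↥(Submodule.span ℝ
        (Set.range fun F₁ : KGraph k => fun F₂ : KGraph k => homT α β (glue F₁ F₂)))
      = (orbCount α β k : Cardinal) := by
  classical
  -- the orbit count equals the number of relE-classes
  have hiff : ∀ φ ψ : Fin k → Fin m,
      (∃ σ : Equiv.Perm (Fin m), IsAut α β σ ∧ ψ = σ ∘ φ) ↔ relE α β k φ ψ := by
    intro φ ψ
    constructor
    · rintro ⟨σ, hσ, rfl⟩
      exact relE_of_aut α β σ hσ φ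
    · exact fun h => aut_of_relE α β hα hβ htf h
  have horb : orbCount α β k = Nat.card (Quot (relE α β k)) :=
    Nat.card_congr (Quot.congrRight hiff)
  -- the connection-matrix linear map
  set L : ((Fin k → Fin m) → ℝ) →ₗ[ℝ] (KGraph k → ℝ) :=
    { toFun := fun x F₂ => ∑ φ, (∏ i, α (φ i)) * x φ * homPhi α β F₂ φ,
      map_add' := by
        intro x y
        funext F₂
        show ∑ φ, (∏ i, α (φ i)) * (x φ + y φ) * homPhi α β F₂ φ = _
        rw [show ((fun F₂ => ∑ φ, (∏ i, α (φ i)) * x φ * homPhi α β F₂ φ) +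
            (fun F₂ => ∑ φ, (∏ i, α (φ i)) * y φ * homPhi α β F₂ φ)) F₂
            = (∑ φ, (∏ i, α (φ i)) * x φ * homPhi α β F₂ φ) +
              (∑ φ, (∏ i, α (φ i)) * y φ * homPhi α β F₂ φ) from rfl]
        rw [← Finset.sum_add_distrib]
        exact Finset.sum_congr rfl fun φ _ => by ring
      map_smul' := by
        intro c x
        funext F₂
        show ∑ φ, (∏ i, α (φ i)) * (c * x φ) * homPhi α β F₂ φ = _
        rw [show (((RingHom.id ℝ) c) • fun F₂ => ∑ φ, (∏ i, α (φ i)) * x φ * homPhi α β F₂ φ) F₂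
            = c * ∑ φ, (∏ i, α (φ i)) * x φ * homPhi α β F₂ φ from rfl]
        rw [Finset.mul_sum]
        exact Finset.sum_congr rfl fun φ _ => by ring } with hLdef
  have hrow : ∀ F₁ : KGraph k,
      (fun F₂ : KGraph k => homT α β (glue F₁ F₂)) = L (homPhi α β F₁) := by
    intro F₁
    funext F₂
    rw [homT_glue α β hα F₁ F₂]
    show _ = ∑ φ, (∏ i, α (φ i)) * homPhi α β F₁ φ * homPhi α β F₂ φ
    exact Finset.sum_congr rfl fun φ _ => by ring
  have hspan : Submodule.span ℝ
      (Set.range fun F₁ : KGraph k => fun F₂ : KGraph k => homT α β (glue F₁ F₂))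
      = Submodule.map L (AA α β k) := by
    have h1 : (Set.range fun F₁ : KGraph k => fun F₂ : KGraph k => homT α β (glue F₁ F₂))
        = L '' (Set.range fun F : KGraph k => homPhi α β F) := by
      rw [← Set.range_comp]
      exact congrArg Set.range (funext fun F₁ => hrow F₁)
    rw [h1, Submodule.span_image]
    rfl
  -- injectivity of L on the algebra
  have hker : ∀ x ∈ AA α β k, L x = 0 → x = 0 := by
    intro x hx hLx
    have hBz : ∀ f ∈ AA α β k, ∑ φ, (∏ i, α (φ i)) * x φ * f φ = 0 := by
      intro f hf
      refine Submodule.span_induction ?_ ?_ ?_ ?_ hf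
      · rintro _ ⟨F, rfl⟩
        exact congrFun hLx F
      · simp
      · intro a b _ _ ha hb
        have : ∀ φ : Fin k → Fin m, (∏ i, α (φ i)) * x φ * (a + b) φ =
            (∏ i, α (φ i)) * x φ * a φ + (∏ i, α (φ i)) * x φ * b φ := by
          intro φ; show _ * _ * (a φ + b φ) = _; ring
        rw [Finset.sum_congr rfl fun φ _ => this φ, Finset.sum_add_distrib, ha, hb, add_zero]
      · intro c a _ ha
        have : ∀ φ : Fin k → Fin m, (∏ i, α (φ i)) * x φ * (c • a) φ =
            c * ((∏ i, α (φ i)) * x φ * a φ) := by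
          intro φ; show _ * _ * (c * a φ) = _; ring
        rw [Finset.sum_congr rfl fun φ _ => this φ, ← Finset.mul_sum, ha, mul_zero]
    have hxx := hBz x hx
    funext φ
    have hnn : ∀ φ' ∈ Finset.univ, (0:ℝ) ≤ (∏ i, α (φ' i)) * x φ' * x φ' := by
      intro φ' _
      rw [mul_assoc]
      exact mul_nonneg (le_of_lt (Finset.prod_pos fun i _ => hα (φ' i))) (mul_self_nonneg _)
    have hterm := (Finset.sum_eq_zero_iff_of_nonneg hnn).mp hxx φ (Finset.mem_univ φ)
    have hc : (0:ℝ) < ∏ i, α (φ i) := Finset.prod_pos fun i _ => hα (φ i)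
    rw [mul_assoc] at hterm
    rcases mul_eq_zero.mp hterm with h' | h'
    · exact absurd h' (ne_of_gt hc)
    · exact mul_self_eq_zero.mp h'
  have hinj : Function.Injective (L.domRestrict (AA α β k)) := by
    rw [← LinearMap.ker_eq_bot, eq_bot_iff]
    rintro ⟨x, hx⟩ hxk
    have hLx : L x = 0 := hxk
    have := hker x hx hLx
    simp only [Submodule.mem_bot]
    exact Subtype.ext this
  rw [hspan, ← LinearMap.range_domRestrict]
  have e := lift_rank_range_of_injective (L.domRestrict (AA α β k)) hinj
  rw [rank_AA α β hα k] at e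
  rw [Cardinal.lift_id'] at e
  rw [Cardinal.lift_natCast] at e
  rw [e, horb]
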